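/- For k odd, let b(k) = 2^{k-1}/(k·C(k-1,(k-1)/2)), where C(n,r) is the binomial coefficient. Let f_χ(m) = tanh(β)·Σ_{S∈{-1,1}^k} (∏_j (1+S_j m)/2)·sgn(Σ_j S_j). If tanh(β) < b(k), then m > f_χ(m) for all m ∈ (0,1), f_χ(m) > m for all m ∈ (-1,0), and f_χ(0) = 0; in particular m = 0 is the unique fixed point of f_χ in (-1,1). -/

import Mathlib

/-- `pm b` maps a Boolean to the spin value ±1. -/
noncomputable def pm (b : Bool) : ℝ := if b then 1 else -1

/-!
Write `k = 2n + 1` and `p = (1 + m) / 2`. Grouping spin configurations by their number of `+1`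
spins turns the sum defining `f_χ / tanh β` into `2 P(Bin(k, p) > n) - 1`, a sum of Bernstein
polynomials in `p`; it is odd in `m` because flipping every spin flips the sign of the majority.
The derivative of Bernstein polynomials telescopes, so its derivative is
`k C(2n, n) ((1 - m²) / 4)^n = (1 - m²)^n / b(k)`. Hence it is strictly increasing on `[-1, 1]`,
and by the mean value theorem it is at most `m / b(k)` on `[0, 1]`; multiplying by
`tanh β < b(k)` gives `f_χ(m) < m` there, and oddness gives the other half.
-/

open Finset Polynomial

lemma pm_not (b : Bool) : pm (!b) = -pm b := by cases b <;> simp [pm]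

def boolFunEquivFinset (α : Type*) [Fintype α] [DecidableEq α] :
    (α → Bool) ≃ Finset α where
  toFun S := {j | S j}
  invFun A j := decide (j ∈ A)
  left_inv S := by funext j; simp
  right_inv A := by ext j; simp

section SpinSums
variable {α : Type*} [Fintype α] [DecidableEq α]

lemma prod_one_add_pm_mul_div_two (A : Finset α) (m : ℝ) :
    ∏ j, (1 + pm (decide (j ∈ A)) * m) / 2 =
      ((1 + m) / 2) ^ #A * ((1 - m) / 2) ^ (Fintype.card α - #A) := by
  have : ∀ j, (1 + pm (decide (j ∈ A)) * m) / 2 =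
      if j ∈ A then (1 + m) / 2 else (1 - m) / 2 := by
    intro j; by_cases h : j ∈ A <;> simp [pm, h]; ring
  simp only [this, prod_ite, filter_mem_eq_inter, filter_not, univ_inter, prod_const,
    card_univ_sdiff]

lemma sum_pm_decide_mem (A : Finset α) :
    ∑ j, pm (decide (j ∈ A)) = 2 * #A - Fintype.card α := by
  have : ∀ j, pm (decide (j ∈ A)) = if j ∈ A then 1 else -1 := by
    intro j; by_cases h : j ∈ A <;> simp [pm, h]
  simp only [this, sum_ite, filter_mem_eq_inter, filter_not, univ_inter, sum_const, card_univ_sdiff,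
    nsmul_eq_mul, Nat.cast_sub (card_le_univ A)]
  ring

lemma sum_boolFun_eq_sum_bernstein (g : ℝ → ℝ) (m : ℝ) :
    ∑ S : α → Bool, (∏ j, (1 + pm (S j) * m) / 2) * g (∑ j, pm (S j)) =
      ∑ t ∈ range (Fintype.card α + 1),
        (bernsteinPolynomial ℝ (Fintype.card α) t).eval ((1 + m) / 2) *
          g (2 * t - Fintype.card α) := by
  rw [← (boolFunEquivFinset α).symm.sum_comp, ← powerset_univ]
  simp only [boolFunEquivFinset, Equiv.coe_fn_symm_mk, prod_one_add_pm_mul_div_two,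
    sum_pm_decide_mem]
  rw [sum_powerset_apply_card (fun t => ((1 + m) / 2) ^ t * ((1 - m) / 2) ^ (Fintype.card α - t) *
    g (2 * t - Fintype.card α)), card_univ]
  refine sum_congr rfl fun t _ => ?_
  simp only [nsmul_eq_mul, bernsteinPolynomial, eval_mul, eval_natCast, eval_pow, eval_X, eval_sub,
    eval_one]
  ring

end SpinSums

noncomputable def majorityMagnetization (k : ℕ) (m : ℝ) : ℝ :=
  ∑ S : Fin k → Bool, (∏ j, (1 + pm (S j) * m) / 2) * Real.sign (∑ j, pm (S j))

lemma majorityMagnetization_neg (k : ℕ) (m : ℝ) :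
    majorityMagnetization k (-m) = -majorityMagnetization k m := by
  rw [majorityMagnetization, ← (Equiv.arrowCongr (Equiv.refl _) Equiv.boolNot).sum_comp,
    majorityMagnetization, ← sum_neg_distrib]
  refine sum_congr rfl fun S _ => ?_
  simp [Equiv.boolNot, pm_not, Real.sign_neg]

lemma majorityMagnetization_zero (k : ℕ) : majorityMagnetization k 0 = 0 := by
  have h := majorityMagnetization_neg k 0
  rw [neg_zero] at h
  linarith

noncomputable def majorityTail (n : ℕ) : ℝ[X] :=
  ∑ j ∈ range (n + 1), bernsteinPolynomial ℝ (2 * n + 1) (n + 1 + j)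

lemma majorityMagnetization_eq_majorityTail (n : ℕ) (m : ℝ) :
    majorityMagnetization (2 * n + 1) m = 2 * (majorityTail n).eval ((1 + m) / 2) - 1 := by
  have hsign : ∀ t : ℕ, Real.sign (2 * (t : ℝ) - ((2 * n + 1 : ℕ) : ℝ)) =
      2 * (if n < t then 1 else 0) - 1 := by
    intro t
    push_cast
    split_ifs with h
    · have : (n : ℝ) + 1 ≤ t := by exact_mod_cast h
      rw [Real.sign_of_pos (by linarith)]; norm_num
    · have : (t : ℝ) ≤ n := by exact_mod_cast not_lt.mp h
      rw [Real.sign_of_neg (by linarith)]; norm_num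
  rw [majorityMagnetization, sum_boolFun_eq_sum_bernstein, Fintype.card_fin]
  simp only [hsign, mul_sub, mul_one, sum_sub_distrib, ← eval_finsetSum, bernsteinPolynomial.sum,
    eval_one]
  rw [show 2 * n + 1 + 1 = (n + 1) + (n + 1) by ring, sum_range_add, sum_eq_zero fun t ht => by
    rw [if_neg (by simpa [Nat.lt_succ_iff] using ht), mul_zero, mul_zero], zero_add,
    majorityTail, eval_finsetSum, mul_sum]
  refine congrArg (· - 1) (sum_congr rfl fun j _ => ?_)
  rw [if_pos (by omega)]
  ring

lemma derivative_majorityTail (n : ℕ) :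
    derivative (majorityTail n) = (2 * n + 1 : ℝ[X]) * bernsteinPolynomial ℝ (2 * n) n := by
  simp only [majorityTail, derivative_sum,
    show ∀ j, n + 1 + j = (n + j) + 1 from fun j => by omega, bernsteinPolynomial.derivative_succ,
    Nat.add_sub_cancel, ← mul_sum]
  have htelescope := sum_range_sub' (fun j => bernsteinPolynomial ℝ (2 * n) (n + j)) (n + 1)
  simp only [← add_assoc, add_zero] at htelescope
  rw [htelescope, bernsteinPolynomial.eq_zero_of_lt ℝ (show 2 * n < n + n + 1 by omega), sub_zero]
  push_cast
  rfl

noncomputable def majoritySlope (n : ℕ) : ℝ := (2 * n + 1) * (2 * n).choose n / 2 ^ (2 * n)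

lemma majoritySlope_pos (n : ℕ) : 0 < majoritySlope n := by
  have := Nat.choose_pos (show n ≤ 2 * n by omega)
  unfold majoritySlope
  positivity

lemma hasDerivAt_majorityMagnetization (n : ℕ) (m : ℝ) :
    HasDerivAt (majorityMagnetization (2 * n + 1)) (majoritySlope n * (1 - m ^ 2) ^ n) m := by
  have hinner : HasDerivAt (fun x : ℝ => (1 + x) / 2) (1 / 2) m := by
    simpa using ((hasDerivAt_id m).const_add 1).div_const 2
  have htail := (((majorityTail n).hasDerivAt ((1 + m) / 2)).comp m hinner).const_mul 2
  rw [funext (majorityMagnetization_eq_majorityTail n)]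
  refine (htail.sub_const 1).congr_deriv ?_
  rw [derivative_majorityTail, majoritySlope]
  simp only [eval_mul, eval_add, eval_ofNat, eval_natCast, eval_pow, eval_sub, eval_one, eval_X,
    bernsteinPolynomial, show 2 * n - n = n by omega, pow_mul]
  rw [div_mul_eq_mul_div, eq_div_iff (by positivity),
    show 1 - m ^ 2 = (1 + m) / 2 * (1 - (1 + m) / 2) * 2 ^ 2 by ring, mul_pow, mul_pow]
  ring

lemma majorityMagnetization_strictMonoOn (n : ℕ) :
    StrictMonoOn (majorityMagnetization (2 * n + 1)) (Set.Icc (-1) 1) := by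
  refine strictMonoOn_of_deriv_pos (convex_Icc _ _)
    (fun x _ => (hasDerivAt_majorityMagnetization n x).continuousAt.continuousWithinAt) ?_
  rw [interior_Icc]
  rintro x ⟨hx1, hx2⟩
  rw [(hasDerivAt_majorityMagnetization n x).deriv]
  have : 0 < 1 - x ^ 2 := by nlinarith
  have := majoritySlope_pos n
  positivity

lemma majorityMagnetization_pos (n : ℕ) {m : ℝ} (hm0 : 0 < m) (hm1 : m ≤ 1) :
    0 < majorityMagnetization (2 * n + 1) m := by
  rw [← majorityMagnetization_zero (2 * n + 1)]
  exact majorityMagnetization_strictMonoOn n (by norm_num) ⟨by linarith, hm1⟩ hm0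

lemma majorityMagnetization_le (n : ℕ) {m : ℝ} (hm0 : 0 ≤ m) (hm1 : m ≤ 1) :
    majorityMagnetization (2 * n + 1) m ≤ majoritySlope n * m := by
  have hdiff : Differentiable ℝ (majorityMagnetization (2 * n + 1)) := fun x =>
    (hasDerivAt_majorityMagnetization n x).differentiableAt
  have := (convex_Icc (0 : ℝ) 1).image_sub_le_mul_sub_of_deriv_le hdiff.continuous.continuousOn
    hdiff.differentiableOn (C := majoritySlope n) ?_ 0 (by norm_num) m ⟨hm0, hm1⟩ hm0
  · simpa [majorityMagnetization_zero] using this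
  rw [interior_Icc]
  rintro x ⟨hx0, hx1⟩
  rw [(hasDerivAt_majorityMagnetization n x).deriv]
  have : (1 - x ^ 2) ^ n ≤ 1 := pow_le_one₀ (by nlinarith) (by nlinarith)
  exact mul_le_of_le_one_right (majoritySlope_pos n).le this

theorem stmt3_general (k : ℕ) (hk : Odd k) (β : ℝ)
    (b : ℝ)
    (hb : b = 2 ^ (k - 1) / ((k : ℝ) * (Nat.choose (k - 1) ((k - 1) / 2) : ℝ)))
    (fχ : ℝ → ℝ)
    (hf : ∀ m, fχ m = Real.tanh β *
      ∑ S : Fin k → Bool, (∏ j, (1 + pm (S j) * m) / 2) * Real.sign (∑ j, pm (S j)))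
    (ht : Real.tanh β < b) :
    (∀ m ∈ Set.Ioo (0:ℝ) 1, fχ m < m) ∧
    (∀ m ∈ Set.Ioo (-1:ℝ) 0, m < fχ m) ∧
    fχ 0 = 0 ∧
    (∀ m ∈ Set.Ioo (-1:ℝ) 1, (fχ m = m ↔ m = 0)) := by
  obtain ⟨n, rfl⟩ := hk
  have hf : ∀ m, fχ m = Real.tanh β * majorityMagnetization (2 * n + 1) m := hf
  have hb : b = (majoritySlope n)⁻¹ := by
    rw [hb, majoritySlope, inv_div, Nat.add_sub_cancel, Nat.mul_div_cancel_left n two_pos]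
    push_cast
    rfl
  have below : ∀ m ∈ Set.Ioo (0:ℝ) 1, fχ m < m := fun m ⟨hm0, hm1⟩ => calc
    fχ m < b * majorityMagnetization (2 * n + 1) m := by
      rw [hf]; exact mul_lt_mul_of_pos_right ht (majorityMagnetization_pos n hm0 hm1.le)
    _ ≤ b * (majoritySlope n * m) := mul_le_mul_of_nonneg_left
      (majorityMagnetization_le n hm0.le hm1.le) (hb ▸ inv_nonneg.mpr (majoritySlope_pos n).le)
    _ = m := by rw [hb, inv_mul_cancel_left₀ (majoritySlope_pos n).ne']
  have above : ∀ m ∈ Set.Ioo (-1:ℝ) 0, m < fχ m := fun m ⟨hm1, hm0⟩ => by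
    have := below (-m) ⟨neg_pos.mpr hm0, by linarith⟩
    rw [hf, majorityMagnetization_neg] at this
    rw [hf]
    linarith
  have at_zero : fχ 0 = 0 := by rw [hf, majorityMagnetization_zero, mul_zero]
  refine ⟨below, above, at_zero, fun m ⟨hm1, hm2⟩ =>
    ⟨fun hfix => ?_, fun h => h ▸ at_zero⟩⟩
  rcases lt_trichotomy m 0 with hm | hm | hm
  · exact absurd hfix (above m ⟨hm1, hm⟩).ne'
  · exact hm
  · exact absurd hfix (below m ⟨hm, hm2⟩).ne

/-- Proposition 1 (stability part): for odd `k`, if `tanh β < b(k)` then `m = 0` is the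
unique fixed point of the majority magnetization map `f_χ` in `(-1,1)`, with
`m > f_χ(m)` on `(0,1)` and `f_χ(m) > m` on `(-1,0)`, and `f_χ(0) = 0`. -/
theorem stmt3 (k : ℕ) (hk : Odd k) (β : ℝ) (hβ : 0 < β)
    (b : ℝ)
    (hb : b = 2 ^ (k - 1) / ((k : ℝ) * (Nat.choose (k - 1) ((k - 1) / 2) : ℝ)))
    (fχ : ℝ → ℝ)
    (hf : ∀ m, fχ m = Real.tanh β *
      ∑ S : Fin k → Bool, (∏ j, (1 + pm (S j) * m) / 2) * Real.sign (∑ j, pm (S j)))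
    (ht : Real.tanh β < b) :
    (∀ m ∈ Set.Ioo (0:ℝ) 1, fχ m < m) ∧
    (∀ m ∈ Set.Ioo (-1:ℝ) 0, m < fχ m) ∧
    fχ 0 = 0 ∧
    (∀ m ∈ Set.Ioo (-1:ℝ) 1, (fχ m = m ↔ m = 0)) :=
  stmt3_general k hk β b hb fχ hf ht
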